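/- Let X be the quotient of R̃ × S¹ by the equivalence relation generated by (u, z) ∼ (−u, z) and (u, z) ∼ (σ(u), −z), where σ(u) = (−u₁, −u₂, −u₃, −u₄, u₅, u₆, u₇, u₈), equipped with the quotient topology. Then X is homeomorphic to ℝP³ × S³ × S¹. -/

import Mathlib

/-- `R̃ ⊂ ℝ⁸`: the set of `u` with `u₁² + ⋯ + u₈² = 1` and
`u₁² + u₂² + u₃² + u₄² = u₅² + u₆² + u₇² + u₈²`, with the subspace topology. -/
def Rtilde : Set (EuclideanSpace ℝ (Fin 8)) :=
  {u | u 0 ^ 2 + u 1 ^ 2 + u 2 ^ 2 + u 3 ^ 2 + u 4 ^ 2 + u 5 ^ 2 + u 6 ^ 2 + u 7 ^ 2 = 1 ∧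
       u 0 ^ 2 + u 1 ^ 2 + u 2 ^ 2 + u 3 ^ 2 = u 4 ^ 2 + u 5 ^ 2 + u 6 ^ 2 + u 7 ^ 2}

/-- The involution `σ(u) = (−u₁, −u₂, −u₃, −u₄, u₅, u₆, u₇, u₈)` of `ℝ⁸`. -/
def sigmaInv (u : EuclideanSpace ℝ (Fin 8)) : EuclideanSpace ℝ (Fin 8) :=
  WithLp.toLp 2 (fun j => if (j : ℕ) < 4 then -u j else u j)

/-- The unit circle in `ℂ`. -/
abbrev Circle1 : Type := Metric.sphere (0 : ℂ) 1

/-- The 3-sphere, as the unit sphere in `ℝ⁴`. -/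
abbrev Sphere3 : Type := Metric.sphere (0 : EuclideanSpace ℝ (Fin 4)) 1

/-- The relations `(u, z) ∼ (−u, z)` and `(u, z) ∼ (σ(u), −z)` on `R̃ × S¹`. -/
def cobRel (p q : Rtilde × Circle1) : Prop :=
  ((q.1 : EuclideanSpace ℝ (Fin 8)) = -(p.1 : EuclideanSpace ℝ (Fin 8)) ∧ q.2 = p.2) ∨
  ((q.1 : EuclideanSpace ℝ (Fin 8)) = sigmaInv (p.1 : EuclideanSpace ℝ (Fin 8)) ∧
    (q.2 : ℂ) = -(p.2 : ℂ))

/-- The quotient `X = (R̃ × S¹)/∼`, with the quotient topology. -/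
def Xquot : Type := Quot cobRel

noncomputable instance : TopologicalSpace Xquot := by unfold Xquot; infer_instance

/-- Real projective 3-space, as the quotient of `S³` by the antipodal map
(equivalently, the projectivization of `ℝ⁴`), with the quotient topology. -/
def RP3 : Type := Quot (fun x y : Sphere3 =>
  (y : EuclideanSpace ℝ (Fin 4)) = -(x : EuclideanSpace ℝ (Fin 4)))

noncomputable instance : TopologicalSpace RP3 := by unfold RP3; infer_instance

-- ====== auxiliary ======
open Quaternion

noncomputable section

abbrev E4 : Type := EuclideanSpace ℝ (Fin 4)
abbrev E8 : Type := EuclideanSpace ℝ (Fin 8)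

def toE (q : ℍ) : E4 := Quaternion.linearIsometryEquivTuple q
def toQ (v : E4) : ℍ := Quaternion.linearIsometryEquivTuple.symm v

@[simp] lemma toQ_toE (q : ℍ) : toQ (toE q) = q :=
  Quaternion.linearIsometryEquivTuple.symm_apply_apply q
@[simp] lemma toE_toQ (v : E4) : toE (toQ v) = v :=
  Quaternion.linearIsometryEquivTuple.apply_symm_apply v
@[simp] lemma norm_toE (q : ℍ) : ‖toE q‖ = ‖q‖ :=
  Quaternion.linearIsometryEquivTuple.norm_map q
lemma toE_inj : Function.Injective toE := Quaternion.linearIsometryEquivTuple.injective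
@[simp] lemma toE_neg (q : ℍ) : toE (-q) = -toE q :=
  map_neg Quaternion.linearIsometryEquivTuple q
lemma toE_smul (r : ℝ) (q : ℍ) : toE (r • q) = r • toE q :=
  Quaternion.linearIsometryEquivTuple.map_smul r q
lemma toQ_apply (v : E4) : toQ v = ⟨v 0, v 1, v 2, v 3⟩ := rfl

def mkQ (a b c d : ℝ) : ℍ := ⟨a, b, c, d⟩

def Aq (u : E8) : ℍ := ⟨u 0, u 1, u 2, u 3⟩
def Bq (u : E8) : ℍ := ⟨u 4, u 5, u 6, u 7⟩

lemma normSq_Aq (u : E8) : normSq (Aq u) = u 0 ^ 2 + u 1 ^ 2 + u 2 ^ 2 + u 3 ^ 2 := by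
  rw [normSq_def']; rfl
lemma normSq_Bq (u : E8) : normSq (Bq u) = u 4 ^ 2 + u 5 ^ 2 + u 6 ^ 2 + u 7 ^ 2 := by
  rw [normSq_def']; rfl

lemma eq_of_sq_eq_sq {a b : ℝ} (ha : 0 ≤ a) (hb : 0 ≤ b) (h : a ^ 2 = b ^ 2) : a = b := by
  nlinarith

lemma norm_sq_Aq (u : E8) (hu : u ∈ Rtilde) : ‖Aq u‖ ^ 2 = 1 / 2 := by
  have := hu.1; have := hu.2
  have h := Quaternion.normSq_eq_norm_mul_self (Aq u)
  rw [normSq_Aq] at h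
  nlinarith [h]

lemma norm_sq_Bq (u : E8) (hu : u ∈ Rtilde) : ‖Bq u‖ ^ 2 = 1 / 2 := by
  have := hu.1; have := hu.2
  have h := Quaternion.normSq_eq_norm_mul_self (Bq u)
  rw [normSq_Bq] at h
  nlinarith [h]

lemma Aq_ne_zero (u : E8) (hu : u ∈ Rtilde) : Aq u ≠ 0 := by
  intro h
  have := norm_sq_Aq u hu
  rw [h] at this
  simp at this

lemma norm_coeComplex (z : ℂ) : ‖(z : ℍ)‖ = ‖z‖ := by
  refine eq_of_sq_eq_sq (norm_nonneg _) (norm_nonneg _) ?_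
  have h := Quaternion.normSq_eq_norm_mul_self (z : ℍ)
  rw [normSq_def'] at h
  have h2 : ‖z‖ ^ 2 = z.re ^ 2 + z.im ^ 2 := by
    rw [Complex.sq_norm, Complex.normSq_apply]; ring
  rw [sq, ← h, h2]
  simp

lemma circ_norm (z : Circle1) : ‖(z : ℂ)‖ = 1 := by
  have := z.2; rwa [mem_sphere_zero_iff_norm] at this

lemma sph_norm (x : Sphere3) : ‖(x : E4)‖ = 1 := by
  have := x.2; rwa [mem_sphere_zero_iff_norm] at this

lemma norm_eq_one_of_sq {V : Type*} [NormedAddCommGroup V] {x : V} (h : ‖x‖ ^ 2 = 1) :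
    ‖x‖ = 1 := by
  refine eq_of_sq_eq_sq (norm_nonneg _) zero_le_one ?_
  simpa using h

def sph1 (p : Rtilde × Circle1) : Sphere3 :=
  ⟨toE (Real.sqrt 2 • Aq (p.1 : E8)), by
    rw [mem_sphere_zero_iff_norm]
    refine norm_eq_one_of_sq ?_
    rw [norm_toE, norm_smul]
    have h1 : ‖Aq (p.1 : E8)‖ ^ 2 = 1 / 2 := norm_sq_Aq _ p.1.2
    have h2 : (0:ℝ) ≤ Real.sqrt 2 := Real.sqrt_nonneg 2
    have h3 : Real.sqrt 2 ^ 2 = 2 := Real.sq_sqrt (by norm_num)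
    rw [Real.norm_eq_abs, abs_of_nonneg h2]
    nlinarith⟩

def q2 (p : Rtilde × Circle1) : ℍ :=
  (2 : ℝ) • (star (Aq (p.1 : E8)) * Bq (p.1 : E8) * ((p.2 : ℂ) : ℍ))

def sph2 (p : Rtilde × Circle1) : Sphere3 :=
  ⟨toE (q2 p), by
    rw [mem_sphere_zero_iff_norm]
    refine norm_eq_one_of_sq ?_
    rw [norm_toE, q2, norm_smul, norm_mul, norm_mul, norm_star, norm_coeComplex,
      circ_norm]
    have h1 : ‖Aq (p.1 : E8)‖ ^ 2 = 1 / 2 := norm_sq_Aq _ p.1.2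
    have h2 : ‖Bq (p.1 : E8)‖ ^ 2 = 1 / 2 := norm_sq_Bq _ p.1.2
    rw [Real.norm_eq_abs, abs_of_nonneg (by norm_num : (0:ℝ) ≤ 2)]
    have ha : (0:ℝ) ≤ ‖Aq (p.1 : E8)‖ := norm_nonneg _
    have hb : (0:ℝ) ≤ ‖Bq (p.1 : E8)‖ := norm_nonneg _
    nlinarith⟩

def circ2 (p : Rtilde × Circle1) : Circle1 :=
  ⟨(p.2 : ℂ) ^ 2, by
    rw [mem_sphere_zero_iff_norm, norm_pow, circ_norm]; norm_num⟩

def Fmap (p : Rtilde × Circle1) : RP3 × Sphere3 × Circle1 :=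
  (Quot.mk _ (sph1 p), sph2 p, circ2 p)

lemma Aq_neg (u : E8) : Aq (-u) = -Aq u := by ext <;> simp [Aq] <;> rfl
lemma Bq_neg (u : E8) : Bq (-u) = -Bq u := by ext <;> simp [Bq] <;> rfl
lemma Aq_sigma (u : E8) : Aq (sigmaInv u) = -Aq u := by
  ext <;> simp [Aq, sigmaInv] <;> rfl
lemma Bq_sigma (u : E8) : Bq (sigmaInv u) = Bq u := by
  ext <;> simp [Bq, sigmaInv] <;> (intro h; exact absurd h (by decide))
lemma cq_neg (z : ℂ) : ((-z : ℂ) : ℍ) = -(z : ℍ) := by ext <;> simp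

def r4 : Sphere3 → Sphere3 → Prop := fun x y =>
  (y : EuclideanSpace ℝ (Fin 4)) = -(x : EuclideanSpace ℝ (Fin 4))

lemma rp3_sound {x y : Sphere3} (h : (y : E4) = -(x : E4)) :
    (Quot.mk r4 x : RP3) = Quot.mk r4 y := Quot.sound h

lemma Fmap_resp : ∀ p q, cobRel p q → Fmap p = Fmap q := by
  rintro p q (⟨h1, h2⟩ | ⟨h1, h2⟩) <;>
    refine Prod.ext ?_ (Prod.ext ?_ ?_)
  · refine rp3_sound ?_
    show toE (Real.sqrt 2 • Aq (q.1 : E8)) = -(toE (Real.sqrt 2 • Aq (p.1 : E8)))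
    rw [h1, Aq_neg, smul_neg, toE_neg]
  · refine Subtype.ext ?_
    show toE (q2 p) = toE (q2 q)
    unfold q2
    rw [h1, h2, Aq_neg, Bq_neg, star_neg, neg_mul_neg]
  · refine Subtype.ext ?_
    show ((p.2 : ℂ)) ^ 2 = ((q.2 : ℂ)) ^ 2
    rw [h2]
  · refine rp3_sound ?_
    show toE (Real.sqrt 2 • Aq (q.1 : E8)) = -(toE (Real.sqrt 2 • Aq (p.1 : E8)))
    rw [h1, Aq_sigma, smul_neg, toE_neg]
  · refine Subtype.ext ?_
    show toE (q2 p) = toE (q2 q)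
    unfold q2
    rw [h1, h2, Aq_sigma, Bq_sigma, cq_neg, star_neg]
    simp [mul_neg, neg_mul, neg_neg]
  · refine Subtype.ext ?_
    show ((p.2 : ℂ)) ^ 2 = ((q.2 : ℂ)) ^ 2
    rw [h2, neg_pow]
    norm_num

def Fq : Xquot → RP3 × Sphere3 × Circle1 := Quot.lift Fmap Fmap_resp

lemma continuous_mkQ {X : Type*} [TopologicalSpace X] {f g h k : X → ℝ}
    (hf : Continuous f) (hg : Continuous g) (hh : Continuous h) (hk : Continuous k) :
    Continuous fun x => mkQ (f x) (g x) (h x) (k x) := by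
  have h1 : Continuous fun x =>
      ((WithLp.equiv 2 (Fin 4 → ℝ)).symm ![f x, g x, h x, k x] : E4) := by
    refine (PiLp.continuous_toLp 2 (fun _ : Fin 4 => ℝ)).comp ?_
    refine continuous_pi fun i => ?_
    fin_cases i <;> simpa
  have h2 := Quaternion.linearIsometryEquivTuple.symm.continuous.comp h1
  exact h2.congr fun x => rfl

lemma continuous_val1 : Continuous fun p : Rtilde × Circle1 => (p.1 : E8) :=
  continuous_subtype_val.comp continuous_fst

lemma continuous_Aq : Continuous fun p : Rtilde × Circle1 => Aq (p.1 : E8) :=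
  continuous_mkQ ((PiLp.continuous_apply 2 _ _).comp continuous_val1)
    ((PiLp.continuous_apply 2 _ _).comp continuous_val1)
    ((PiLp.continuous_apply 2 _ _).comp continuous_val1)
    ((PiLp.continuous_apply 2 _ _).comp continuous_val1)

lemma continuous_Bq : Continuous fun p : Rtilde × Circle1 => Bq (p.1 : E8) :=
  continuous_mkQ ((PiLp.continuous_apply 2 _ _).comp continuous_val1)
    ((PiLp.continuous_apply 2 _ _).comp continuous_val1)
    ((PiLp.continuous_apply 2 _ _).comp continuous_val1)
    ((PiLp.continuous_apply 2 _ _).comp continuous_val1)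

lemma continuous_val2 : Continuous fun p : Rtilde × Circle1 => (p.2 : ℂ) :=
  continuous_subtype_val.comp continuous_snd

lemma continuous_cq : Continuous fun p : Rtilde × Circle1 => (((p.2 : ℂ)) : ℍ) :=
  (continuous_mkQ (Complex.continuous_re.comp continuous_val2)
    (Complex.continuous_im.comp continuous_val2) continuous_const continuous_const).congr
    fun _ => rfl

lemma continuous_Fmap : Continuous Fmap := by
  have hs1 : Continuous sph1 := by
    unfold sph1
    exact Continuous.subtype_mk
      (Quaternion.linearIsometryEquivTuple.continuous.comp (continuous_Aq.const_smul (Real.sqrt 2))) _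
  have hs2 : Continuous sph2 := by
    unfold sph2 q2
    exact Continuous.subtype_mk
      (Quaternion.linearIsometryEquivTuple.continuous.comp
        (((continuous_Aq.star.mul continuous_Bq).mul continuous_cq).const_smul (2:ℝ))) _
  have hc2 : Continuous circ2 := by
    unfold circ2
    exact Continuous.subtype_mk (continuous_val2.pow 2) _
  exact (continuous_quot_mk.comp hs1).prodMk (hs2.prodMk hc2)

lemma continuous_Fq : Continuous Fq :=
  continuous_quot_lift _ continuous_Fmap

lemma norm_of_mem (u : E8) (hu : u ∈ Rtilde) : ‖u‖ = 1 := by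
  refine norm_eq_one_of_sq ?_
  rw [EuclideanSpace.norm_eq, Real.sq_sqrt (by positivity), Fin.sum_univ_eight]
  simp only [Real.norm_eq_abs, sq_abs]
  exact hu.1

lemma isCompact_Rtilde : IsCompact Rtilde := by
  refine Metric.isCompact_of_isClosed_isBounded ?_ ?_
  · have hcont : ∀ i : Fin 8, Continuous fun u : E8 => u i := fun i => PiLp.continuous_apply 2 _ i
    have h1 : IsClosed {u : E8 | u 0 ^ 2 + u 1 ^ 2 + u 2 ^ 2 + u 3 ^ 2 + u 4 ^ 2 + u 5 ^ 2
        + u 6 ^ 2 + u 7 ^ 2 = 1} := by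
      refine isClosed_eq ?_ continuous_const
      fun_prop
    have h2 : IsClosed {u : E8 | u 0 ^ 2 + u 1 ^ 2 + u 2 ^ 2 + u 3 ^ 2
        = u 4 ^ 2 + u 5 ^ 2 + u 6 ^ 2 + u 7 ^ 2} := by
      refine isClosed_eq ?_ ?_ <;> fun_prop
    exact (h1.inter h2 : IsClosed Rtilde)
  · refine Metric.isBounded_closedBall (x := (0 : E8)) (r := 1) |>.subset ?_
    intro u hu
    rw [Metric.mem_closedBall, dist_zero_right, norm_of_mem u hu]

instance : CompactSpace Rtilde := isCompact_iff_compactSpace.mp isCompact_Rtilde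

instance : CompactSpace Xquot := by
  unfold Xquot
  exact Quot.compactSpace

lemma sphere_coord_ne (x : Sphere3) : ∃ i, (x : E4) i ≠ 0 := by
  by_contra h
  push_neg at h
  have h0 : (x : E4) = 0 := PiLp.ext h
  have h1 := sph_norm x
  rw [h0, norm_zero] at h1
  norm_num at h1

def outer (x : Sphere3) : Fin 4 → Fin 4 → ℝ := fun i j => (x : E4) i * (x : E4) j

lemma outer_resp (x y : Sphere3) (h : r4 x y) : outer x = outer y := by
  funext i j
  have : ∀ i, (y : E4) i = -((x : E4) i) := fun i => by rw [h]; rfl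
  simp [outer, this]

lemma outer_eq_cases {x y : Sphere3} (h : outer x = outer y) :
    (y : E4) = (x : E4) ∨ (y : E4) = -(x : E4) := by
  obtain ⟨i, hi⟩ := sphere_coord_ne x
  have key : ∀ a b : Fin 4, (x : E4) a * (x : E4) b = (y : E4) a * (y : E4) b :=
    fun a b => congrFun (congrFun h a) b
  have hii := key i i
  have hyi : (y : E4) i = (x : E4) i ∨ (y : E4) i = -((x : E4) i) := by
    have : ((y : E4) i - (x : E4) i) * ((y : E4) i + (x : E4) i) = 0 := by ring_nf; linarith [hii]
    rcases mul_eq_zero.mp this with h' | h'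
    · left; linarith
    · right; linarith
  rcases hyi with h' | h'
  · left
    ext j
    have := key i j
    rw [h'] at this
    exact (mul_left_cancel₀ hi this).symm
  · right
    ext j
    have := key i j
    rw [h'] at this
    have hxi : -((x : E4) i) ≠ 0 := neg_ne_zero.mpr hi
    have : (x : E4) j = -((y : E4) j) := by
      have h2 : -((x : E4) i) * (-((x : E4) j)) = -((x : E4) i) * (y : E4) j := by
        ring_nf; ring_nf at this; linarith
      have := mul_left_cancel₀ hxi h2
      linarith
    show (y : E4) j = -((x : E4) j)
    rw [this]; ring

noncomputable instance : T2Space RP3 := by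
  have hresp : ∀ x y : Sphere3, r4 x y → outer x = outer y := outer_resp
  refine T2Space.of_injective_continuous (f := Quot.lift outer hresp) ?_ ?_
  · refine Quot.ind fun x => Quot.ind fun y h => ?_
    simp only [Quot.lift] at h
    rcases outer_eq_cases (x := x) (y := y) h with h' | h'
    · have : x = y := Subtype.ext h'.symm
      rw [this]
    · exact Quot.sound h'
  · refine continuous_quot_lift _ ?_
    refine continuous_pi fun i => continuous_pi fun j => ?_
    exact ((PiLp.continuous_apply 2 _ i).comp continuous_subtype_val).mul
      ((PiLp.continuous_apply 2 _ j).comp continuous_subtype_val)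

lemma rp3_eq_cases {x y : Sphere3} (h : (Quot.mk r4 x : RP3) = Quot.mk r4 y) :
    (y : E4) = (x : E4) ∨ (y : E4) = -(x : E4) := by
  rw [Quot.eq] at h
  induction h with
  | rel a b hab => exact Or.inr hab
  | refl a => exact Or.inl rfl
  | symm a b hab ih =>
      rcases ih with h' | h'
      · exact Or.inl h'.symm
      · exact Or.inr (by rw [h', neg_neg])
  | trans a b c hab hbc ih1 ih2 =>
      rcases ih1 with h1 | h1 <;> rcases ih2 with h2 | h2
      · exact Or.inl (h2.trans h1)
      · exact Or.inr (by rw [h2, h1])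
      · exact Or.inr (by rw [h2, h1])
      · exact Or.inl (by rw [h2, h1, neg_neg])

lemma ext8 {v u : E8} (h0 : v 0 = u 0) (h1 : v 1 = u 1) (h2 : v 2 = u 2) (h3 : v 3 = u 3)
    (h4 : v 4 = u 4) (h5 : v 5 = u 5) (h6 : v 6 = u 6) (h7 : v 7 = u 7) : v = u := by
  ext j
  fin_cases j <;> assumption

lemma Aq_coords {v u : E8} (h : Aq v = Aq u) :
    v 0 = u 0 ∧ v 1 = u 1 ∧ v 2 = u 2 ∧ v 3 = u 3 := by
  refine ⟨congrArg QuaternionAlgebra.re h, congrArg QuaternionAlgebra.imI h,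
    congrArg QuaternionAlgebra.imJ h, congrArg QuaternionAlgebra.imK h⟩

lemma Aq_coords_neg {v u : E8} (h : Aq v = -Aq u) :
    v 0 = -u 0 ∧ v 1 = -u 1 ∧ v 2 = -u 2 ∧ v 3 = -u 3 := by
  refine ⟨congrArg QuaternionAlgebra.re h, congrArg QuaternionAlgebra.imI h,
    congrArg QuaternionAlgebra.imJ h, congrArg QuaternionAlgebra.imK h⟩

lemma Bq_coords {v u : E8} (h : Bq v = Bq u) :
    v 4 = u 4 ∧ v 5 = u 5 ∧ v 6 = u 6 ∧ v 7 = u 7 := by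
  refine ⟨congrArg QuaternionAlgebra.re h, congrArg QuaternionAlgebra.imI h,
    congrArg QuaternionAlgebra.imJ h, congrArg QuaternionAlgebra.imK h⟩

lemma Bq_coords_neg {v u : E8} (h : Bq v = -Bq u) :
    v 4 = -u 4 ∧ v 5 = -u 5 ∧ v 6 = -u 6 ∧ v 7 = -u 7 := by
  refine ⟨congrArg QuaternionAlgebra.re h, congrArg QuaternionAlgebra.imI h,
    congrArg QuaternionAlgebra.imJ h, congrArg QuaternionAlgebra.imK h⟩

lemma sigma_apply_lt (u : E8) (j : Fin 8) (h : (j : ℕ) < 4) : sigmaInv u j = -u j := by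
  simp [sigmaInv, h]

lemma sigma_apply_ge (u : E8) (j : Fin 8) (h : ¬((j : ℕ) < 4)) : sigmaInv u j = u j := by
  simp [sigmaInv, h]

lemma eq_sigma_of_AB {v u : E8} (hA : Aq v = -Aq u) (hB : Bq v = Bq u) : v = sigmaInv u := by
  obtain ⟨a0, a1, a2, a3⟩ := Aq_coords_neg hA
  obtain ⟨b4, b5, b6, b7⟩ := Bq_coords hB
  refine ext8 ?_ ?_ ?_ ?_ ?_ ?_ ?_ ?_
  · rw [sigma_apply_lt u 0 (by decide)]; exact a0
  · rw [sigma_apply_lt u 1 (by decide)]; exact a1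
  · rw [sigma_apply_lt u 2 (by decide)]; exact a2
  · rw [sigma_apply_lt u 3 (by decide)]; exact a3
  · rw [sigma_apply_ge u 4 (by decide)]; exact b4
  · rw [sigma_apply_ge u 5 (by decide)]; exact b5
  · rw [sigma_apply_ge u 6 (by decide)]; exact b6
  · rw [sigma_apply_ge u 7 (by decide)]; exact b7

lemma neg_apply8 (u : E8) (j : Fin 8) : (-u) j = -(u j) := rfl

lemma eq_sigma_neg_of_AB {v u : E8} (hA : Aq v = Aq u) (hB : Bq v = -Bq u) :
    v = sigmaInv (-u) := by
  obtain ⟨a0, a1, a2, a3⟩ := Aq_coords hA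
  obtain ⟨b4, b5, b6, b7⟩ := Bq_coords_neg hB
  refine ext8 ?_ ?_ ?_ ?_ ?_ ?_ ?_ ?_
  · rw [sigma_apply_lt (-u) 0 (by decide), neg_apply8, neg_neg]; exact a0
  · rw [sigma_apply_lt (-u) 1 (by decide), neg_apply8, neg_neg]; exact a1
  · rw [sigma_apply_lt (-u) 2 (by decide), neg_apply8, neg_neg]; exact a2
  · rw [sigma_apply_lt (-u) 3 (by decide), neg_apply8, neg_neg]; exact a3
  · rw [sigma_apply_ge (-u) 4 (by decide), neg_apply8]; exact b4
  · rw [sigma_apply_ge (-u) 5 (by decide), neg_apply8]; exact b5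
  · rw [sigma_apply_ge (-u) 6 (by decide), neg_apply8]; exact b6
  · rw [sigma_apply_ge (-u) 7 (by decide), neg_apply8]; exact b7

lemma eq_neg_of_AB {v u : E8} (hA : Aq v = -Aq u) (hB : Bq v = -Bq u) : v = -u := by
  obtain ⟨a0, a1, a2, a3⟩ := Aq_coords_neg hA
  obtain ⟨b4, b5, b6, b7⟩ := Bq_coords_neg hB
  exact ext8 a0 a1 a2 a3 b4 b5 b6 b7

lemma eq_of_AB {v u : E8} (hA : Aq v = Aq u) (hB : Bq v = Bq u) : v = u := by
  obtain ⟨a0, a1, a2, a3⟩ := Aq_coords hA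
  obtain ⟨b4, b5, b6, b7⟩ := Bq_coords hB
  exact ext8 a0 a1 a2 a3 b4 b5 b6 b7

lemma Rtilde.neg_mem {u : E8} (hu : u ∈ Rtilde) : -u ∈ Rtilde := by
  obtain ⟨h1, h2⟩ := hu
  constructor <;> simp only [neg_apply8, neg_sq]
  exacts [h1, h2]

lemma cq_ne_zero (z : Circle1) : (((z : ℂ)) : ℍ) ≠ 0 := by
  intro h
  have h2 := norm_coeComplex (z : ℂ)
  rw [h, norm_zero, circ_norm] at h2
  norm_num at h2

lemma cancel_ends {a b c d : ℍ} (ha : a ≠ 0) (hc : c ≠ 0) (h : a * b * c = a * d * c) : b = d :=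
  mul_left_cancel₀ ha (mul_right_cancel₀ hc h)

lemma sqrt2_ne : (Real.sqrt 2 : ℝ) ≠ 0 := by positivity

lemma Fmap_inj (p q : Rtilde × Circle1) (h : Fmap p = Fmap q) :
    Quot.mk cobRel p = Quot.mk cobRel q := by
  have h1 : (Quot.mk r4 (sph1 p) : RP3) = Quot.mk r4 (sph1 q) := congrArg Prod.fst h
  have h2 : sph2 p = sph2 q := congrArg (fun t => t.2.1) h
  have h3 : circ2 p = circ2 q := congrArg (fun t => t.2.2) h
  have hAcases : Aq (q.1 : E8) = Aq (p.1 : E8) ∨ Aq (q.1 : E8) = -Aq (p.1 : E8) := by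
    rcases rp3_eq_cases h1 with h' | h'
    · left
      have hh : toE (Real.sqrt 2 • Aq (q.1 : E8)) = toE (Real.sqrt 2 • Aq (p.1 : E8)) := h'
      exact smul_right_injective ℍ sqrt2_ne (toE_inj hh)
    · right
      have hh : toE (Real.sqrt 2 • Aq (q.1 : E8)) = toE (Real.sqrt 2 • (-Aq (p.1 : E8))) := by
        rw [smul_neg, toE_neg]; exact h'
      exact smul_right_injective ℍ sqrt2_ne (toE_inj hh)
  have hzcases : (q.2 : ℂ) = (p.2 : ℂ) ∨ (q.2 : ℂ) = -(p.2 : ℂ) := by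
    have h3' : ((p.2 : ℂ)) ^ 2 = ((q.2 : ℂ)) ^ 2 := congrArg Subtype.val h3
    have hfac : ((q.2 : ℂ) - (p.2 : ℂ)) * ((q.2 : ℂ) + (p.2 : ℂ)) = 0 := by
      linear_combination -h3'
    rcases mul_eq_zero.mp hfac with h' | h'
    · left; exact sub_eq_zero.mp h'
    · right; exact eq_neg_of_add_eq_zero_left h'
  have hE : star (Aq (p.1 : E8)) * Bq (p.1 : E8) * (((p.2 : ℂ)) : ℍ)
      = star (Aq (q.1 : E8)) * Bq (q.1 : E8) * (((q.2 : ℂ)) : ℍ) := by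
    have h2' : toE (q2 p) = toE (q2 q) := congrArg Subtype.val h2
    have hq2 : q2 p = q2 q := toE_inj h2'
    unfold q2 at hq2
    exact smul_right_injective ℍ (by norm_num : (2:ℝ) ≠ 0) hq2
  have hstarA : star (Aq (p.1 : E8)) ≠ 0 := star_ne_zero.mpr (Aq_ne_zero _ p.1.2)
  have hcz : (((p.2 : ℂ)) : ℍ) ≠ 0 := cq_ne_zero p.2
  rcases hAcases with hA | hA <;> rcases hzcases with hz | hz
  · -- identity case
    have hB : Bq (q.1 : E8) = Bq (p.1 : E8) := by
      rw [hA, hz] at hE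
      exact (cancel_ends hstarA hcz hE).symm
    have hpq : q = p := Prod.ext (Subtype.ext (eq_of_AB hA hB)) (Subtype.ext hz)
    rw [hpq]
  · -- A same, z negated : two steps
    have hB : Bq (q.1 : E8) = -Bq (p.1 : E8) := by
      rw [hA, hz, cq_neg] at hE
      have hE' : star (Aq (p.1 : E8)) * Bq (p.1 : E8) * (((p.2 : ℂ)) : ℍ)
          = star (Aq (p.1 : E8)) * (-Bq (q.1 : E8)) * (((p.2 : ℂ)) : ℍ) := by
        rw [hE]; simp only [mul_neg, neg_mul, neg_neg]
      have := cancel_ends hstarA hcz hE'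
      rw [this, neg_neg]
    have step1 : Quot.mk cobRel p
        = Quot.mk cobRel (⟨-(p.1 : E8), Rtilde.neg_mem p.1.2⟩, p.2) :=
      Quot.sound (Or.inl ⟨rfl, rfl⟩)
    have step2 : Quot.mk cobRel (⟨-(p.1 : E8), Rtilde.neg_mem p.1.2⟩, p.2)
        = Quot.mk cobRel q := by
      refine Quot.sound (Or.inr ⟨?_, ?_⟩)
      · exact eq_sigma_neg_of_AB hA hB
      · exact hz
    rw [step1, step2]
  · -- A negated, z same
    have hB : Bq (q.1 : E8) = -Bq (p.1 : E8) := by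
      rw [hA, hz, star_neg] at hE
      have hE' : star (Aq (p.1 : E8)) * Bq (p.1 : E8) * (((p.2 : ℂ)) : ℍ)
          = star (Aq (p.1 : E8)) * (-Bq (q.1 : E8)) * (((p.2 : ℂ)) : ℍ) := by
        rw [hE]; simp only [mul_neg, neg_mul, neg_neg]
      have := cancel_ends hstarA hcz hE'
      rw [this, neg_neg]
    refine Quot.sound (Or.inl ⟨eq_neg_of_AB hA hB, Subtype.ext hz⟩)
  · -- A negated, z negated
    have hB : Bq (q.1 : E8) = Bq (p.1 : E8) := by
      rw [hA, hz, star_neg, cq_neg] at hE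
      have hE' : star (Aq (p.1 : E8)) * Bq (p.1 : E8) * (((p.2 : ℂ)) : ℍ)
          = star (Aq (p.1 : E8)) * Bq (q.1 : E8) * (((p.2 : ℂ)) : ℍ) := by
        rw [hE]; simp only [mul_neg, neg_mul, neg_neg]
      exact (cancel_ends hstarA hcz hE').symm
    refine Quot.sound (Or.inr ⟨eq_sigma_of_AB hA hB, hz⟩)

lemma norm_toQ (v : E4) : ‖toQ v‖ = ‖v‖ :=
  Quaternion.linearIsometryEquivTuple.symm.norm_map v

def qc (q : ℍ) : ℕ → ℝ
  | 0 => q.re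
  | 1 => q.imI
  | 2 => q.imJ
  | _ => q.imK

lemma exists_sqrt_circle (w : ℂ) (hw : ‖w‖ = 1) : ∃ z : ℂ, ‖z‖ = 1 ∧ z ^ 2 = w := by
  refine ⟨Complex.exp (((w.arg / 2 : ℝ)) * Complex.I), ?_, ?_⟩
  · exact Complex.norm_exp_ofReal_mul_I _
  · have key : (((w.arg / 2 : ℝ)) * Complex.I) + (((w.arg / 2 : ℝ)) * Complex.I)
        = (w.arg : ℂ) * Complex.I := by push_cast; ring
    rw [sq, ← Complex.exp_add, key]
    have h2 := Complex.norm_mul_exp_arg_mul_I w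
    rw [hw] at h2
    simpa using h2

lemma Fq_surj : Function.Surjective Fq := by
  rintro ⟨r1, d, w⟩
  induction r1 using Quot.ind with
  | _ x =>
  obtain ⟨z, hz1, hz2⟩ := exists_sqrt_circle (w : ℂ) (circ_norm w)
  have hzne : ((z : ℍ)) ≠ 0 := by
    rw [← norm_ne_zero_iff, norm_coeComplex, hz1]; norm_num
  set a : ℍ := toQ (x : E4) with ha
  have hna : ‖a‖ = 1 := by rw [ha, norm_toQ, sph_norm]
  set c : ℍ := toQ (d : E4) * ((z : ℍ))⁻¹ with hc
  set b : ℍ := a * c with hb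
  have hnd : ‖toQ (d : E4)‖ = 1 := by rw [norm_toQ, sph_norm]
  have hnzi : ‖((z : ℍ))⁻¹‖ = 1 := by
    rw [norm_inv, norm_coeComplex, hz1]; norm_num
  have hnb : ‖b‖ = 1 := by
    rw [hb, hc, norm_mul, norm_mul, hna, hnd, hnzi]; norm_num
  set u : E8 := WithLp.toLp 2 (fun j => (if (j : ℕ) < 4 then qc a (j : ℕ) else qc b ((j : ℕ) - 4))
      / Real.sqrt 2 : Fin 8 → ℝ) with hudef
  have hAu : Aq u = (Real.sqrt 2)⁻¹ • a := by
    ext <;>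
      simp only [Aq, hudef, Quaternion.re_smul, Quaternion.imI_smul,
        Quaternion.imJ_smul, Quaternion.imK_smul, smul_eq_mul] <;>
      norm_num [qc, div_eq_inv_mul] <;> (intro hcon; exact absurd hcon (by decide))
  have hBu : Bq u = (Real.sqrt 2)⁻¹ • b := by
    ext <;>
      simp only [Bq, hudef, Quaternion.re_smul, Quaternion.imI_smul,
        Quaternion.imJ_smul, Quaternion.imK_smul, smul_eq_mul] <;>
      norm_num [qc, div_eq_inv_mul] <;> (intro hcon; exact absurd hcon (by decide))
  have hsq2 : Real.sqrt 2 * Real.sqrt 2 = 2 := Real.mul_self_sqrt (by norm_num)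
  have hA2 : u 0 ^ 2 + u 1 ^ 2 + u 2 ^ 2 + u 3 ^ 2 = 1 / 2 := by
    rw [← normSq_Aq u, hAu, normSq_smul, Quaternion.normSq_eq_norm_mul_self, hna]
    field_simp
    exact (Real.sq_sqrt (by norm_num)).symm
  have hB2 : u 4 ^ 2 + u 5 ^ 2 + u 6 ^ 2 + u 7 ^ 2 = 1 / 2 := by
    rw [← normSq_Bq u, hBu, normSq_smul, Quaternion.normSq_eq_norm_mul_self, hnb]
    field_simp
    exact (Real.sq_sqrt (by norm_num)).symm
  have hu : u ∈ Rtilde := ⟨by linarith, by linarith⟩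
  refine ⟨Quot.mk cobRel (⟨u, hu⟩, ⟨z, by rwa [mem_sphere_zero_iff_norm]⟩), ?_⟩
  show Fmap _ = _
  refine Prod.ext ?_ (Prod.ext ?_ ?_)
  · show Quot.mk r4 (sph1 _) = Quot.mk r4 x
    refine congrArg (Quot.mk r4) (Subtype.ext ?_)
    show toE (Real.sqrt 2 • Aq u) = (x : E4)
    rw [hAu, smul_smul, mul_inv_cancel₀ sqrt2_ne, one_smul, ha, toE_toQ]
  · refine Subtype.ext ?_
    show toE (q2 _) = (d : E4)
    unfold q2
    show toE ((2:ℝ) • (star (Aq u) * Bq u * ((z : ℍ)))) = (d : E4)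
    rw [hAu, hBu]
    rw [Quaternion.star_smul]
    rw [smul_mul_assoc ((Real.sqrt 2)⁻¹) (star a) ((Real.sqrt 2)⁻¹ • b)]
    rw [mul_smul_comm ((Real.sqrt 2)⁻¹) (star a) b]
    rw [smul_smul ((Real.sqrt 2)⁻¹) ((Real.sqrt 2)⁻¹) (star a * b)]
    rw [smul_mul_assoc (((Real.sqrt 2)⁻¹) * ((Real.sqrt 2)⁻¹)) (star a * b) ((z : ℍ))]
    rw [smul_smul (2:ℝ) (((Real.sqrt 2)⁻¹) * ((Real.sqrt 2)⁻¹)) (star a * b * ((z : ℍ)))]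
    have hcoef : (2:ℝ) * ((Real.sqrt 2)⁻¹ * (Real.sqrt 2)⁻¹) = 1 := by
      rw [← mul_inv, hsq2]
      norm_num
    rw [hcoef, one_smul]
    have hsa : star a * a = (1 : ℍ) := by
      rw [Quaternion.star_mul_self, Quaternion.normSq_eq_norm_mul_self, hna]
      norm_num
    rw [hb, ← mul_assoc, hsa, one_mul, hc, mul_assoc, inv_mul_cancel₀ hzne, mul_one, toE_toQ]
  · refine Subtype.ext ?_
    exact hz2

lemma Fq_inj : Function.Injective Fq := by
  refine Quot.ind fun p => Quot.ind fun q h => ?_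
  exact Fmap_inj p q h

end

/-- `X` is homeomorphic to `ℝP³ × S³ × S¹`. -/
theorem Xquot_homeomorph :
    Nonempty (Xquot ≃ₜ RP3 × Sphere3 × Circle1) := by
  have hbij : Function.Bijective Fq := ⟨Fq_inj, Fq_surj⟩
  exact ⟨Continuous.homeoOfEquivCompactToT2 (f := Equiv.ofBijective Fq hbij) continuous_Fq⟩
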